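/- Truth Lemma: for every maximally EDL-consistent set Γ and every formula φ ∈ L_KB, M^c, e_Γ ⊨_h φ if and only if φ ∈ Γ, where M^c is the canonical hypergraph model for EDL. -/

import Mathlib

namespace DoxHG

/-- Formulas of the epistemic-doxastic language `L_KB`. -/
inductive Form (Ag Atom : Type) : Type
  | atom : Atom → Form Ag Atom
  | neg  : Form Ag Atom → Form Ag Atom
  | and  : Form Ag Atom → Form Ag Atom → Form Ag Atom
  | B    : Ag → Form Ag Atom → Form Ag Atom
  | K    : Ag → Form Ag Atom → Form Ag Atom

namespace Form

variable {Ag Atom : Type}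

/-- φ ∨ ψ := ¬(¬φ ∧ ¬ψ) -/
def or (φ ψ : Form Ag Atom) : Form Ag Atom := .neg (.and (.neg φ) (.neg ψ))

/-- φ → ψ := ¬φ ∨ ψ -/
def imp (φ ψ : Form Ag Atom) : Form Ag Atom := Form.or (.neg φ) ψ

/-- φ ↔ ψ -/
def biimp (φ ψ : Form Ag Atom) : Form Ag Atom := .and (φ.imp ψ) (ψ.imp φ)

/-- ⊥ := p ∧ ¬p for an arbitrary but fixed propositional variable p. -/
def bot [Inhabited Atom] : Form Ag Atom := .and (.atom default) (.neg (.atom default))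

/-- Membership in the doxastic fragment `L_B` (no knowledge operators). -/
def noK : Form Ag Atom → Prop
  | .atom _  => True
  | .neg φ   => φ.noK
  | .and φ ψ => φ.noK ∧ ψ.noK
  | .B _ φ   => φ.noK
  | .K _ _   => False

/-- φ is an `a`-formula: all variables are local variables of `a` (as given by
`owner`) and all modal operators are `B a` or `K a`. -/
def isAFormula (owner : Atom → Ag) (a : Ag) : Form Ag Atom → Prop
  | .atom p  => owner p = a
  | .neg φ   => φ.isAFormula owner a
  | .and φ ψ => φ.isAFormula owner a ∧ ψ.isAFormula owner a
  | .B b φ   => b = a ∧ φ.isAFormula owner a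
  | .K b φ   => b = a ∧ φ.isAFormula owner a

end Form

/-- φ is (an instance of) a classical propositional tautology: it evaluates to
true under every boolean valuation that respects negation and conjunction
(treating atoms and modal formulas as opaque). -/
def Tautology {Ag Atom : Type} (φ : Form Ag Atom) : Prop :=
  ∀ v : Form Ag Atom → Bool,
    (∀ ψ, v (.neg ψ) = !v ψ) →
    (∀ ψ χ, v (.and ψ χ) = (v ψ && v χ)) →
    v φ = true

/-! ### Doxastic Kripke models -/

/-- A doxastic Kripke model (with set of worlds the type `W`, assumed nonempty
where required): doxastic accessibility relations `B a` and valuation `V`. -/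
structure KModel (Ag Atom W : Type) where
  B : Ag → W → W → Prop
  V : W → Set Atom

section Kripke

variable {Ag Atom W : Type}

/-- Kripke satisfaction `⊨ₖ`; `K a` is interpreted via the equivalence relation
generated by `B a` (i.e. `Relation.EqvGen`, the smallest equivalence relation
containing it). -/
def ksat (M : KModel Ag Atom W) : W → Form Ag Atom → Prop
  | w, .atom p  => p ∈ M.V w
  | w, .neg φ   => ¬ ksat M w φ
  | w, .and φ ψ => ksat M w φ ∧ ksat M w ψ
  | w, .B a φ   => ∀ u, M.B a w u → ksat M u φ
  | w, .K a φ   => ∀ u, Relation.EqvGen (M.B a) w u → ksat M u φ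

def KModel.Serial (M : KModel Ag Atom W) : Prop := ∀ (a : Ag) (w : W), ∃ u, M.B a w u

def KModel.Transit (M : KModel Ag Atom W) : Prop :=
  ∀ (a : Ag) (u v w : W), M.B a u v → M.B a v w → M.B a u w

def KModel.Eucl (M : KModel Ag Atom W) : Prop :=
  ∀ (a : Ag) (u v w : W), M.B a u v → M.B a u w → M.B a v w

/-- Locality: worlds related by `B a ∪ (B a)⁻¹` agree on the local variables of `a`. -/
def KModel.Local (owner : Atom → Ag) (M : KModel Ag Atom W) : Prop :=
  ∀ (a : Ag) (u v : W), (M.B a u v ∨ M.B a v u) →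
    M.V u ∩ {p | owner p = a} = M.V v ∩ {p | owner p = a}

/-- Properness: distinct worlds are distinguished by some agent. -/
def KModel.Proper (M : KModel Ag Atom W) : Prop :=
  ∀ u v : W, u ≠ v → ∃ a : Ag, ¬ Relation.EqvGen (M.B a) u v

end Kripke

/-! ### The Hilbert systems EDL, LocK45 and LocKD45 -/

section ProofSystems

variable {Ag Atom : Type}

/-- Provability in the Hilbert system EDL. -/
inductive EDLProv (owner : Atom → Ag) : Form Ag Atom → Prop
  | taut {φ : Form Ag Atom} : Tautology φ → EDLProv owner φ
  | axKB (a : Ag) (φ ψ : Form Ag Atom) :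
      EDLProv owner ((Form.B a (φ.imp ψ)).imp ((Form.B a φ).imp (Form.B a ψ)))
  | axDB (a : Ag) (φ : Form Ag Atom) :
      EDLProv owner (Form.neg (Form.B a (Form.and φ (Form.neg φ))))
  | ax4B (a : Ag) (φ : Form Ag Atom) :
      EDLProv owner ((Form.B a φ).imp (Form.B a (Form.B a φ)))
  | ax5B (a : Ag) (φ : Form Ag Atom) :
      EDLProv owner ((Form.neg (Form.B a φ)).imp (Form.B a (Form.neg (Form.B a φ))))
  | axKK (a : Ag) (φ ψ : Form Ag Atom) :
      EDLProv owner ((Form.K a (φ.imp ψ)).imp ((Form.K a φ).imp (Form.K a ψ)))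
  | axTK (a : Ag) (φ : Form Ag Atom) :
      EDLProv owner ((Form.K a φ).imp φ)
  | ax4K (a : Ag) (φ : Form Ag Atom) :
      EDLProv owner ((Form.K a φ).imp (Form.K a (Form.K a φ)))
  | ax5K (a : Ag) (φ : Form Ag Atom) :
      EDLProv owner ((Form.neg (Form.K a φ)).imp (Form.K a (Form.neg (Form.K a φ))))
  | axPI (a : Ag) (φ : Form Ag Atom) :
      EDLProv owner ((Form.B a φ).imp (Form.K a (Form.B a φ)))
  | axNI (a : Ag) (φ : Form Ag Atom) :
      EDLProv owner ((Form.neg (Form.B a φ)).imp (Form.K a (Form.neg (Form.B a φ))))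
  | axKIB (a : Ag) (φ : Form Ag Atom) :
      EDLProv owner ((Form.K a φ).imp (Form.B a φ))
  | axLoc (a : Ag) (p : Atom) (h : owner p = a) :
      EDLProv owner (Form.and ((Form.atom p).imp (Form.B a (Form.atom p)))
        ((Form.neg (Form.atom p)).imp (Form.B a (Form.neg (Form.atom p)))))
  | mp {φ ψ : Form Ag Atom} :
      EDLProv owner (φ.imp ψ) → EDLProv owner φ → EDLProv owner ψ
  | nec (a : Ag) {φ : Form Ag Atom} : EDLProv owner φ → EDLProv owner (Form.K a φ)

/-- Provability in the Hilbert systems over the doxastic fragment `L_B`: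
`BProv owner true` is LocKD45 (with axiom D_B) and `BProv owner false` is
LocK45 (without D_B). -/
inductive BProv (owner : Atom → Ag) (withD : Bool) : Form Ag Atom → Prop
  | taut {φ : Form Ag Atom} : φ.noK → Tautology φ → BProv owner withD φ
  | axKB (a : Ag) {φ ψ : Form Ag Atom} (hφ : φ.noK) (hψ : ψ.noK) :
      BProv owner withD ((Form.B a (φ.imp ψ)).imp ((Form.B a φ).imp (Form.B a ψ)))
  | axDB (a : Ag) {φ : Form Ag Atom} (hD : withD = true) (hφ : φ.noK) :
      BProv owner withD (Form.neg (Form.B a (Form.and φ (Form.neg φ))))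
  | ax4B (a : Ag) {φ : Form Ag Atom} (hφ : φ.noK) :
      BProv owner withD ((Form.B a φ).imp (Form.B a (Form.B a φ)))
  | ax5B (a : Ag) {φ : Form Ag Atom} (hφ : φ.noK) :
      BProv owner withD ((Form.neg (Form.B a φ)).imp (Form.B a (Form.neg (Form.B a φ))))
  | axLoc (a : Ag) (p : Atom) (h : owner p = a) :
      BProv owner withD (Form.and ((Form.atom p).imp (Form.B a (Form.atom p)))
        ((Form.neg (Form.atom p)).imp (Form.B a (Form.neg (Form.atom p)))))
  | mp {φ ψ : Form Ag Atom} :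
      BProv owner withD (φ.imp ψ) → BProv owner withD φ → BProv owner withD ψ
  | nec (a : Ag) {φ : Form Ag Atom} : BProv owner withD φ → BProv owner withD (Form.B a φ)

/-- Conjunction of a finite list of formulas (the empty conjunction is ¬⊥). -/
def conj [Inhabited Atom] : List (Form Ag Atom) → Form Ag Atom
  | []        => Form.neg Form.bot
  | [φ]       => φ
  | φ :: rest => Form.and φ (conj rest)

/-- Γ ⊢ φ in EDL: some finite subset Δ ⊆ Γ has EDL ⊢ (⋀Δ) → φ. -/
def ProvFrom [Inhabited Atom] (owner : Atom → Ag) (Γ : Set (Form Ag Atom))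
    (φ : Form Ag Atom) : Prop :=
  ∃ L : List (Form Ag Atom), (∀ ψ ∈ L, ψ ∈ Γ) ∧ EDLProv owner ((conj L).imp φ)

/-- Γ is EDL-consistent. -/
def EDLConsistent [Inhabited Atom] (owner : Atom → Ag) (Γ : Set (Form Ag Atom)) : Prop :=
  ¬ ProvFrom owner Γ Form.bot

/-- Γ is maximally EDL-consistent. -/
def MaxEDLConsistent [Inhabited Atom] (owner : Atom → Ag) (Γ : Set (Form Ag Atom)) : Prop :=
  EDLConsistent owner Γ ∧ ∀ Δ : Set (Form Ag Atom), Γ ⊂ Δ → ¬ EDLConsistent owner Δ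

end ProofSystems

/-! ### Directed hypergraph models -/

/-- The undirected hyperedge `ē = T(e) ∪ H(e)` induced by a directed hyperedge
`e = (T(e), H(e))`. -/
def ebar {V : Type} (e : Set V × Set V) : Set V := e.1 ∪ e.2

/-- A (directed) hypergraph model: a vertex set, a set of directed hyperedges
(pairs (tail, head)), a coloring and a valuation.  Well-formedness conditions
are stated separately. -/
structure HModel (Ag Atom V : Type) where
  Vset : Set V
  E : Set (Set V × Set V)
  χ : V → Ag
  ℓ : V → Set Atom

namespace HModel

variable {Ag Atom V : Type}

/-- `(Vset, E)` is a directed hypergraph: the vertex set is nonempty and every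
hyperedge consists of a finite tail and a finite head, disjoint from each
other, both made of vertices. -/
def IsHypergraph (M : HModel Ag Atom V) : Prop :=
  M.Vset.Nonempty ∧
    ∀ e ∈ M.E, e.1 ⊆ M.Vset ∧ e.2 ⊆ M.Vset ∧ e.1.Finite ∧ e.2.Finite ∧ Disjoint e.1 e.2

/-- χ is a coloring: distinct vertices of the same hyperedge get distinct colors. -/
def IsChromatic (M : HModel Ag Atom V) : Prop :=
  ∀ e ∈ M.E, Set.InjOn M.χ (ebar e)

/-- The valuation assigns to an `a`-colored vertex only local variables of `a`. -/
def ValOk (owner : Atom → Ag) (M : HModel Ag Atom V) : Prop :=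
  ∀ v ∈ M.Vset, M.ℓ v ⊆ {p | owner p = M.χ v}

/-- M is a (well-formed, chromatic) hypergraph model. -/
def IsModel (owner : Atom → Ag) (M : HModel Ag Atom V) : Prop :=
  M.IsHypergraph ∧ M.IsChromatic ∧ M.ValOk owner

/-- Simplicity: for distinct hyperedges, `ē₁ ⊄ ē₂`. -/
def Simple (M : HModel Ag Atom V) : Prop :=
  ∀ e₁ ∈ M.E, ∀ e₂ ∈ M.E, e₁ ≠ e₂ → ¬ ebar e₁ ⊆ ebar e₂

/-- n-uniformity: every hyperedge has exactly `n` vertices. -/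
def Uniform (M : HModel Ag Atom V) (n : ℕ) : Prop :=
  ∀ e ∈ M.E, (ebar e).ncard = n

/-- Tail-completeness: every vertex lies in the tail of some hyperedge. -/
def TailComplete (M : HModel Ag Atom V) : Prop :=
  ∀ v ∈ M.Vset, ∃ e ∈ M.E, v ∈ e.1

end HModel

section HSemantics

variable {Ag Atom V : Type}

/-- The doxastic accessibility relation `B^G_a` between hyperedges:
some `a`-colored vertex lies in `ē₁ ∩ T(e₂)`. -/
def Bacc (M : HModel Ag Atom V) (a : Ag) (e₁ e₂ : Set V × Set V) : Prop :=
  ∃ u : V, M.χ u = a ∧ u ∈ ebar e₁ ∧ u ∈ e₂.1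

/-- The epistemic accessibility relation `K^G_a` between hyperedges:
some `a`-colored vertex lies in `ē₁ ∩ ē₂`. -/
def Kacc (M : HModel Ag Atom V) (a : Ag) (e₁ e₂ : Set V × Set V) : Prop :=
  ∃ u : V, M.χ u = a ∧ u ∈ ebar e₁ ∧ u ∈ ebar e₂

/-- `ℓ(e) = ⋃_{u ∈ ē} ℓ(u)`. -/
def elabel (M : HModel Ag Atom V) (e : Set V × Set V) : Set Atom :=
  ⋃ u ∈ ebar e, M.ℓ u

/-- Hypergraph satisfaction `⊨ₕ`. -/
def hsat (M : HModel Ag Atom V) : Set V × Set V → Form Ag Atom → Prop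
  | e, .atom p  => p ∈ elabel M e
  | e, .neg φ   => ¬ hsat M e φ
  | e, .and φ ψ => hsat M e φ ∧ hsat M e ψ
  | e, .B a φ   => ∀ e' ∈ M.E, Bacc M a e e' → hsat M e' φ
  | e, .K a φ   => ∀ e' ∈ M.E, Kacc M a e e' → hsat M e' φ

end HSemantics

end DoxHG

namespace DoxHG

section Canonical

variable {Ag Atom : Type}

/-- `Γ^{B_a} := {φ | B_aφ ∈ Γ}`. -/
def projB (Γ : Set (Form Ag Atom)) (a : Ag) : Set (Form Ag Atom) := {φ | Form.B a φ ∈ Γ}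

/-- `Γ^{K_a} := {φ | K_aφ ∈ Γ}`. -/
def projK (Γ : Set (Form Ag Atom)) (a : Ag) : Set (Form Ag Atom) := {φ | Form.K a φ ∈ Γ}

/-- `V_a(Γ) := Γ ∩ Var_a` (as a set of atomic formulas). -/
def Vform (owner : Atom → Ag) (Γ : Set (Form Ag Atom)) (a : Ag) : Set (Form Ag Atom) :=
  {ψ | ψ ∈ Γ ∧ ∃ p : Atom, owner p = a ∧ ψ = Form.atom p}

/-- `B̂_a(Γ) := {B_aφ | B_aφ ∈ Γ}`. -/
def Bhat (Γ : Set (Form Ag Atom)) (a : Ag) : Set (Form Ag Atom) :=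
  {ψ | ψ ∈ Γ ∧ ∃ φ : Form Ag Atom, ψ = Form.B a φ}

/-- `s(Γ,a) := V_a(Γ) ∪ B̂_a(Γ)`. -/
def sSet (owner : Atom → Ag) (Γ : Set (Form Ag Atom)) (a : Ag) : Set (Form Ag Atom) :=
  Vform owner Γ a ∪ Bhat Γ a

/-- The canonical vertex `s(Γ,a)`, tagged with its color `a`. -/
def cvert (owner : Atom → Ag) (Γ : Set (Form Ag Atom)) (a : Ag) :
    Ag × Set (Form Ag Atom) :=
  (a, sSet owner Γ a)

/-- `T(Γ) := {s(Γ,b) | b ∈ Ag, Γ^{B_b} ⊆ Γ}`. -/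
def Tset (owner : Atom → Ag) (Γ : Set (Form Ag Atom)) : Set (Ag × Set (Form Ag Atom)) :=
  {v | ∃ b : Ag, projB Γ b ⊆ Γ ∧ v = cvert owner Γ b}

/-- `H(Γ) := {s(Γ,b) | b ∈ Ag, Γ^{B_b} ⊄ Γ}`. -/
def Hset (owner : Atom → Ag) (Γ : Set (Form Ag Atom)) : Set (Ag × Set (Form Ag Atom)) :=
  {v | ∃ b : Ag, ¬ projB Γ b ⊆ Γ ∧ v = cvert owner Γ b}

/-- The canonical hyperedge `e_Γ = (T(Γ), H(Γ))`. -/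
def cedge (owner : Atom → Ag) (Γ : Set (Form Ag Atom)) :
    Set (Ag × Set (Form Ag Atom)) × Set (Ag × Set (Form Ag Atom)) :=
  (Tset owner Γ, Hset owner Γ)

/-- The canonical hypergraph model `M^c` for EDL. -/
def canonHM [Inhabited Atom] (owner : Atom → Ag) :
    HModel Ag Atom (Ag × Set (Form Ag Atom)) where
  Vset := {v | ∃ Γ : Set (Form Ag Atom), MaxEDLConsistent owner Γ ∧ ∃ a : Ag, v = cvert owner Γ a}
  E := {e | ∃ Γ : Set (Form Ag Atom), MaxEDLConsistent owner Γ ∧ e = cedge owner Γ}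
  χ := Prod.fst
  ℓ := fun v => {p : Atom | Form.atom p ∈ v.2 ∧ owner p = v.1}

end Canonical

end DoxHG

namespace DoxHG
section TruthLemmaAux

variable {Ag Atom : Type} [Inhabited Atom] {owner : Atom → Ag}

/-! #### Boolean valuation helpers -/

lemma vimp (v : Form Ag Atom → Bool)
    (hn : ∀ ψ, v (.neg ψ) = !v ψ) (ha : ∀ ψ χ, v (.and ψ χ) = (v ψ && v χ))
    (φ ψ : Form Ag Atom) : v (φ.imp ψ) = (!v φ || v ψ) := by
  simp only [Form.imp, Form.or, hn, ha, Bool.not_not]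
  cases v φ <;> cases v ψ <;> rfl

lemma vbot (v : Form Ag Atom → Bool)
    (hn : ∀ ψ, v (.neg ψ) = !v ψ) (ha : ∀ ψ χ, v (.and ψ χ) = (v ψ && v χ)) :
    v (Form.bot : Form Ag Atom) = false := by
  simp only [Form.bot, hn, ha]
  cases v (Form.atom default) <;> rfl

/-! #### Tautology instances -/

section Tauts
variable (φ ψ χ : Form Ag Atom)

lemma tautId : Tautology (φ.imp φ) := by
  intro v hn ha; rw [vimp v hn ha]; cases v φ <;> rfl

lemma tautConst : Tautology (ψ.imp (φ.imp ψ)) := by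
  intro v hn ha; simp only [vimp v hn ha]; cases v φ <;> cases v ψ <;> rfl

lemma tautTrans : Tautology ((φ.imp ψ).imp ((ψ.imp χ).imp (φ.imp χ))) := by
  intro v hn ha; simp only [vimp v hn ha]
  cases v φ <;> cases v ψ <;> cases v χ <;> rfl

lemma tautAndIntro : Tautology ((χ.imp φ).imp ((χ.imp ψ).imp (χ.imp (φ.and ψ)))) := by
  intro v hn ha; simp only [vimp v hn ha, ha]
  cases v φ <;> cases v ψ <;> cases v χ <;> rfl

lemma tautAndLeft : Tautology ((φ.and ψ).imp φ) := by
  intro v hn ha; simp only [vimp v hn ha, ha]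
  cases v φ <;> cases v ψ <;> rfl

lemma tautAndRight : Tautology ((φ.and ψ).imp ψ) := by
  intro v hn ha; simp only [vimp v hn ha, ha]
  cases v φ <;> cases v ψ <;> rfl

lemma tautFrege : Tautology ((χ.imp (φ.imp ψ)).imp ((χ.imp φ).imp (χ.imp ψ))) := by
  intro v hn ha; simp only [vimp v hn ha]
  cases v φ <;> cases v ψ <;> cases v χ <;> rfl

lemma tautNegIntro : Tautology (((χ.and φ).imp Form.bot).imp (χ.imp (.neg φ))) := by
  intro v hn ha; simp only [vimp v hn ha, ha, hn, vbot v hn ha]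
  cases v φ <;> cases v χ <;> rfl

lemma tautDNE : Tautology ((Form.neg (.neg φ)).imp φ) := by
  intro v hn ha; simp only [vimp v hn ha, hn]; cases v φ <;> rfl

lemma tautNotBot : Tautology (Form.neg (Form.bot : Form Ag Atom)) := by
  intro v hn ha; rw [hn, vbot v hn ha]; rfl

lemma tautPairIntro : Tautology (φ.imp (ψ.imp (φ.and ψ))) := by
  intro v hn ha; simp only [vimp v hn ha, ha]
  cases v φ <;> cases v ψ <;> rfl

lemma tautExplode : Tautology (φ.imp ((Form.neg φ).imp Form.bot)) := by
  intro v hn ha; simp only [vimp v hn ha, hn, vbot v hn ha]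
  cases v φ <;> rfl

lemma tautCurryBot : Tautology (((χ.and φ).imp ψ).imp (χ.imp (φ.imp ψ))) := by
  intro v hn ha; simp only [vimp v hn ha, ha]
  cases v φ <;> cases v ψ <;> cases v χ <;> rfl

lemma tautNegImpBot : Tautology (((Form.neg φ).imp Form.bot).imp φ) := by
  intro v hn ha; simp only [vimp v hn ha, hn, vbot v hn ha]
  cases v φ <;> rfl

lemma tautImpBotNeg : Tautology ((φ.imp Form.bot).imp (Form.neg φ)) := by
  intro v hn ha; simp only [vimp v hn ha, hn, vbot v hn ha]
  cases v φ <;> rfl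

end Tauts

/-! #### Derived rules for EDLProv -/

lemma Prov.trans {φ ψ χ : Form Ag Atom} (h1 : EDLProv owner (φ.imp ψ))
    (h2 : EDLProv owner (ψ.imp χ)) : EDLProv owner (φ.imp χ) :=
  EDLProv.mp (EDLProv.mp (EDLProv.taut (tautTrans φ ψ χ)) h1) h2

lemma Prov.const {φ ψ : Form Ag Atom} (h : EDLProv owner ψ) :
    EDLProv owner (φ.imp ψ) :=
  EDLProv.mp (EDLProv.taut (tautConst φ ψ)) h

lemma Prov.mp2 {φ ψ χ : Form Ag Atom} (h1 : EDLProv owner (χ.imp (φ.imp ψ)))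
    (h2 : EDLProv owner (χ.imp φ)) : EDLProv owner (χ.imp ψ) :=
  EDLProv.mp (EDLProv.mp (EDLProv.taut (tautFrege φ ψ χ)) h1) h2

lemma Prov.andIntro {φ ψ χ : Form Ag Atom} (h1 : EDLProv owner (χ.imp φ))
    (h2 : EDLProv owner (χ.imp ψ)) : EDLProv owner (χ.imp (φ.and ψ)) :=
  EDLProv.mp (EDLProv.mp (EDLProv.taut (tautAndIntro φ ψ χ)) h1) h2

lemma Prov.necB (a : Ag) {φ : Form Ag Atom} (h : EDLProv owner φ) :
    EDLProv owner (Form.B a φ) :=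
  EDLProv.mp (EDLProv.axKIB a φ) (EDLProv.nec a h)

/-! #### Conjunction lemmas -/

lemma conj_cons_cons (φ ψ : Form Ag Atom) (L : List (Form Ag Atom)) :
    conj (φ :: ψ :: L) = Form.and φ (conj (ψ :: L)) := rfl

lemma conj_imp_mem (L : List (Form Ag Atom)) {ψ : Form Ag Atom} (h : ψ ∈ L) :
    EDLProv owner ((conj L).imp ψ) := by
  induction L with
  | nil => cases h
  | cons φ rest ih =>
    rcases List.mem_cons.1 h with rfl | h
    · cases rest with
      | nil => exact EDLProv.taut (tautId ψ)
      | cons r rs => exact EDLProv.taut (tautAndLeft ψ (conj (r :: rs)))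
    · cases rest with
      | nil => cases h
      | cons r rs =>
        exact Prov.trans (EDLProv.taut (tautAndRight φ (conj (r :: rs)))) (ih h)

lemma imp_conj {χ : Form Ag Atom} (L : List (Form Ag Atom))
    (h : ∀ ψ ∈ L, EDLProv owner (χ.imp ψ)) : EDLProv owner (χ.imp (conj L)) := by
  induction L with
  | nil => exact Prov.const (EDLProv.taut (tautNotBot))
  | cons φ rest ih =>
    cases rest with
    | nil => exact h φ List.mem_cons_self
    | cons r rs =>
      exact Prov.andIntro (h φ List.mem_cons_self)
        (ih (fun ψ hψ => h ψ (List.mem_cons_of_mem _ hψ)))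

/-! #### ProvFrom lemmas -/

lemma provFrom_of_prov {Γ : Set (Form Ag Atom)} {φ : Form Ag Atom}
    (h : EDLProv owner φ) : ProvFrom owner Γ φ :=
  ⟨[], by simp, Prov.const h⟩

lemma provFrom_mem {Γ : Set (Form Ag Atom)} {φ : Form Ag Atom} (h : φ ∈ Γ) :
    ProvFrom owner Γ φ :=
  ⟨[φ], by simpa using h, EDLProv.taut (tautId φ)⟩

lemma provFrom_mp {Γ : Set (Form Ag Atom)} {φ ψ : Form Ag Atom}
    (h1 : ProvFrom owner Γ (φ.imp ψ)) (h2 : ProvFrom owner Γ φ) :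
    ProvFrom owner Γ ψ := by
  obtain ⟨L1, hL1, hp1⟩ := h1
  obtain ⟨L2, hL2, hp2⟩ := h2
  refine ⟨L1 ++ L2, ?_, ?_⟩
  · intro χ hχ
    rcases List.mem_append.1 hχ with h | h
    exacts [hL1 _ h, hL2 _ h]
  · have c1 : EDLProv owner ((conj (L1 ++ L2)).imp (conj L1)) :=
      imp_conj _ (fun χ hχ => conj_imp_mem _ (List.mem_append_left _ hχ))
    have c2 : EDLProv owner ((conj (L1 ++ L2)).imp (conj L2)) :=
      imp_conj _ (fun χ hχ => conj_imp_mem _ (List.mem_append_right _ hχ))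
    exact Prov.mp2 (Prov.trans c1 hp1) (Prov.trans c2 hp2)

/-- Deduction theorem. -/
lemma provFrom_deduction {Γ : Set (Form Ag Atom)} {φ ψ : Form Ag Atom}
    (h : ProvFrom owner (insert φ Γ) ψ) : ProvFrom owner Γ (φ.imp ψ) := by
  classical
  obtain ⟨L, hL, hp⟩ := h
  set L' : List (Form Ag Atom) := L.filter (fun χ => χ ∈ Γ) with hL'def
  refine ⟨L', ?_, ?_⟩
  · intro χ hχ
    rw [hL'def] at hχ
    simpa using (List.mem_filter.1 hχ).2
  · have key : EDLProv owner (((conj L').and φ).imp ψ) := by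
      have hall : ∀ χ ∈ L, EDLProv owner (((conj L').and φ).imp χ) := by
        intro χ hχ
        rcases hL χ hχ with rfl | hmem
        · exact EDLProv.taut (tautAndRight (conj L') χ)
        · have : χ ∈ L' := List.mem_filter.2 ⟨hχ, by simpa using hmem⟩
          exact Prov.trans (EDLProv.taut (tautAndLeft (conj L') φ)) (conj_imp_mem _ this)
      exact Prov.trans (imp_conj L hall) hp
    exact EDLProv.mp (EDLProv.taut (tautCurryBot φ ψ (conj L'))) key

lemma provFrom_mono {Γ Δ : Set (Form Ag Atom)} {φ : Form Ag Atom}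
    (hsub : Γ ⊆ Δ) (h : ProvFrom owner Γ φ) : ProvFrom owner Δ φ := by
  obtain ⟨L, hL, hp⟩ := h
  exact ⟨L, fun ψ hψ => hsub (hL ψ hψ), hp⟩

/-! #### MCS lemmas -/

lemma mcs_mem_of_prov {Γ : Set (Form Ag Atom)} (hΓ : MaxEDLConsistent owner Γ)
    {φ : Form Ag Atom} (h : ProvFrom owner Γ φ) : φ ∈ Γ := by
  by_contra hφ
  have hins : ¬ EDLConsistent owner (insert φ Γ) :=
    hΓ.2 _ (Set.ssubset_insert hφ)
  rw [EDLConsistent, not_not] at hins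
  have h1 : ProvFrom owner Γ (φ.imp Form.bot) := provFrom_deduction hins
  exact hΓ.1 (provFrom_mp h1 h)

lemma mcs_prov_mem {Γ : Set (Form Ag Atom)} (hΓ : MaxEDLConsistent owner Γ)
    {φ : Form Ag Atom} (h : EDLProv owner φ) : φ ∈ Γ :=
  mcs_mem_of_prov hΓ (provFrom_of_prov h)

lemma mcs_mp {Γ : Set (Form Ag Atom)} (hΓ : MaxEDLConsistent owner Γ)
    {φ ψ : Form Ag Atom} (h1 : φ.imp ψ ∈ Γ) (h2 : φ ∈ Γ) : ψ ∈ Γ :=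
  mcs_mem_of_prov hΓ (provFrom_mp (provFrom_mem h1) (provFrom_mem h2))

lemma mcs_neg_of_not_mem {Γ : Set (Form Ag Atom)} (hΓ : MaxEDLConsistent owner Γ)
    {φ : Form Ag Atom} (h : φ ∉ Γ) : Form.neg φ ∈ Γ := by
  have hins : ¬ EDLConsistent owner (insert φ Γ) :=
    hΓ.2 _ (Set.ssubset_insert h)
  rw [EDLConsistent, not_not] at hins
  have h1 : ProvFrom owner Γ (φ.imp Form.bot) := provFrom_deduction hins
  exact mcs_mem_of_prov hΓ
    (provFrom_mp (provFrom_of_prov (EDLProv.taut (tautImpBotNeg φ))) h1)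

lemma mcs_not_mem_of_neg {Γ : Set (Form Ag Atom)} (hΓ : MaxEDLConsistent owner Γ)
    {φ : Form Ag Atom} (h : Form.neg φ ∈ Γ) : φ ∉ Γ := by
  intro hφ
  exact hΓ.1 (provFrom_mp (provFrom_mp
    (provFrom_of_prov (EDLProv.taut (tautExplode φ))) (provFrom_mem hφ))
    (provFrom_mem h))

lemma mcs_neg_iff {Γ : Set (Form Ag Atom)} (hΓ : MaxEDLConsistent owner Γ)
    (φ : Form Ag Atom) : Form.neg φ ∈ Γ ↔ φ ∉ Γ :=
  ⟨mcs_not_mem_of_neg hΓ, mcs_neg_of_not_mem hΓ⟩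

lemma mcs_and_iff {Γ : Set (Form Ag Atom)} (hΓ : MaxEDLConsistent owner Γ)
    (φ ψ : Form Ag Atom) : Form.and φ ψ ∈ Γ ↔ φ ∈ Γ ∧ ψ ∈ Γ := by
  constructor
  · intro h
    exact ⟨mcs_mp hΓ (mcs_prov_mem hΓ (EDLProv.taut (tautAndLeft φ ψ))) h,
      mcs_mp hΓ (mcs_prov_mem hΓ (EDLProv.taut (tautAndRight φ ψ))) h⟩
  · rintro ⟨h1, h2⟩
    exact mcs_mp hΓ (mcs_mp hΓ (mcs_prov_mem hΓ (EDLProv.taut (tautPairIntro φ ψ))) h1) h2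

/-! #### Lindenbaum -/

lemma lindenbaum {Γ : Set (Form Ag Atom)} (h : EDLConsistent owner Γ) :
    ∃ Δ : Set (Form Ag Atom), Γ ⊆ Δ ∧ MaxEDLConsistent owner Δ := by
  have H : ∀ c ⊆ {Δ : Set (Form Ag Atom) | Γ ⊆ Δ ∧ EDLConsistent owner Δ},
      IsChain (· ⊆ ·) c → c.Nonempty →
      ∃ ub ∈ {Δ : Set (Form Ag Atom) | Γ ⊆ Δ ∧ EDLConsistent owner Δ}, ∀ s ∈ c, s ⊆ ub := by
    intro c hc hchain hne
    refine ⟨⋃₀ c, ⟨?_, ?_⟩, fun s hs => Set.subset_sUnion_of_mem hs⟩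
    · obtain ⟨s, hs⟩ := hne
      exact (hc hs).1.trans (Set.subset_sUnion_of_mem hs)
    · rintro ⟨L, hL, hp⟩
      -- find a single member of the chain containing all of L
      have : ∃ s ∈ c, ∀ ψ ∈ L, ψ ∈ s := by
        clear hp
        induction L with
        | nil => obtain ⟨s, hs⟩ := hne; exact ⟨s, hs, by simp⟩
        | cons φ rest ih =>
          obtain ⟨s, hsc, hs⟩ := ih (fun ψ hψ => hL ψ (List.mem_cons_of_mem _ hψ))
          obtain ⟨t, htc, hφt⟩ := Set.mem_sUnion.1 (hL φ List.mem_cons_self)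
          rcases hchain.total hsc htc with hst | hts
          · exact ⟨t, htc, by
              intro ψ hψ
              rcases List.mem_cons.1 hψ with rfl | hψ
              exacts [hφt, hst (hs ψ hψ)]⟩
          · exact ⟨s, hsc, by
              intro ψ hψ
              rcases List.mem_cons.1 hψ with rfl | hψ
              exacts [hts hφt, hs ψ hψ]⟩
      obtain ⟨s, hsc, hall⟩ := this
      exact (hc hsc).2 ⟨L, hall, hp⟩
  obtain ⟨m, hm, hmax⟩ := zorn_subset_nonempty _ H Γ ⟨Set.Subset.rfl, h⟩
  refine ⟨m, hm, hmax.1.2, ?_⟩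
  intro Δ hΔ hcon
  have : Δ = m := hmax.eq_of_ge ⟨hmax.1.1.trans hΔ.1, hcon⟩ hΔ.1
  exact hΔ.2 (this ▸ Set.Subset.rfl)

/-! #### Boxed conjunctions in an MCS -/

lemma mcs_box_conj {Γ : Set (Form Ag Atom)} (hΓ : MaxEDLConsistent owner Γ)
    (box : Form Ag Atom → Form Ag Atom)
    (hK : ∀ φ ψ : Form Ag Atom, EDLProv owner ((box (φ.imp ψ)).imp ((box φ).imp (box ψ))))
    (hnec : ∀ φ : Form Ag Atom, EDLProv owner φ → EDLProv owner (box φ))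
    (L : List (Form Ag Atom)) (h : ∀ ψ ∈ L, box ψ ∈ Γ) : box (conj L) ∈ Γ := by
  induction L with
  | nil => exact mcs_prov_mem hΓ (hnec _ (EDLProv.taut tautNotBot))
  | cons φ rest ih =>
    cases rest with
    | nil => exact h φ List.mem_cons_self
    | cons r rs =>
      have h1 : box φ ∈ Γ := h φ List.mem_cons_self
      have h2 : box (conj (r :: rs)) ∈ Γ :=
        ih (fun ψ hψ => h ψ (List.mem_cons_of_mem _ hψ))
      have hpi : EDLProv owner (box (φ.imp ((conj (r :: rs)).imp (φ.and (conj (r :: rs)))))) :=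
        hnec _ (EDLProv.taut (tautPairIntro φ (conj (r :: rs))))
      have s0 : box (φ.imp ((conj (r :: rs)).imp (φ.and (conj (r :: rs))))) ∈ Γ :=
        mcs_prov_mem hΓ hpi
      have s1 : box ((conj (r :: rs)).imp (φ.and (conj (r :: rs)))) ∈ Γ :=
        mcs_mp hΓ (mcs_mp hΓ (mcs_prov_mem hΓ (hK _ _)) s0) h1
      exact mcs_mp hΓ (mcs_mp hΓ (mcs_prov_mem hΓ (hK _ _)) s1) h2

end TruthLemmaAux
section TruthLemmaAux2

variable {Ag Atom : Type} [Inhabited Atom] {owner : Atom → Ag}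

/-! #### Modal reasoning in an MCS -/

lemma mcs_loc_pos {Γ : Set (Form Ag Atom)} (hΓ : MaxEDLConsistent owner Γ)
    {a : Ag} {p : Atom} (hp : owner p = a) (h : Form.atom p ∈ Γ) :
    Form.B a (Form.atom p) ∈ Γ :=
  mcs_mp hΓ ((mcs_and_iff hΓ _ _).1 (mcs_prov_mem hΓ (EDLProv.axLoc a p hp))).1 h

lemma mcs_loc_neg {Γ : Set (Form Ag Atom)} (hΓ : MaxEDLConsistent owner Γ)
    {a : Ag} {p : Atom} (hp : owner p = a) (h : Form.neg (Form.atom p) ∈ Γ) :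
    Form.B a (Form.neg (Form.atom p)) ∈ Γ :=
  mcs_mp hΓ ((mcs_and_iff hΓ _ _).1 (mcs_prov_mem hΓ (EDLProv.axLoc a p hp))).2 h

lemma mcs_no_contra {Γ : Set (Form Ag Atom)} (hΓ : MaxEDLConsistent owner Γ)
    {a : Ag} {φ : Form Ag Atom} (h1 : Form.B a φ ∈ Γ)
    (h2 : Form.B a (Form.neg φ) ∈ Γ) : False := by
  have s0 : Form.B a (φ.imp ((Form.neg φ).imp (φ.and (Form.neg φ)))) ∈ Γ :=
    mcs_prov_mem hΓ (Prov.necB a (EDLProv.taut (tautPairIntro φ (Form.neg φ))))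
  have s1 : Form.B a ((Form.neg φ).imp (φ.and (Form.neg φ))) ∈ Γ :=
    mcs_mp hΓ (mcs_mp hΓ (mcs_prov_mem hΓ (EDLProv.axKB a _ _)) s0) h1
  have s2 : Form.B a (φ.and (Form.neg φ)) ∈ Γ :=
    mcs_mp hΓ (mcs_mp hΓ (mcs_prov_mem hΓ (EDLProv.axKB a _ _)) s1) h2
  exact mcs_not_mem_of_neg hΓ (mcs_prov_mem hΓ (EDLProv.axDB a φ)) s2

/-! #### sSet lemmas -/

lemma atom_mem_sSet_iff {Γ : Set (Form Ag Atom)} {p : Atom} {b : Ag} :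
    Form.atom p ∈ sSet owner Γ b ↔ Form.atom p ∈ Γ ∧ owner p = b := by
  constructor
  · rintro (⟨h, q, hq, he⟩ | ⟨h, φ, he⟩)
    · cases he; exact ⟨h, hq⟩
    · cases he
  · rintro ⟨h, hb⟩
    exact Or.inl ⟨h, p, hb, rfl⟩

lemma B_mem_sSet_iff {Γ : Set (Form Ag Atom)} {φ : Form Ag Atom} {a : Ag} :
    Form.B a φ ∈ sSet owner Γ a ↔ Form.B a φ ∈ Γ := by
  constructor
  · rintro (⟨h, q, hq, he⟩ | ⟨h, ψ, he⟩)
    · cases he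
    · exact h
  · intro h
    exact Or.inr ⟨h, φ, rfl⟩

lemma cvert_mem_ebar (Γ : Set (Form Ag Atom)) (a : Ag) :
    cvert owner Γ a ∈ ebar (cedge owner Γ) := by
  by_cases h : projB Γ a ⊆ Γ
  · exact Or.inl ⟨a, h, rfl⟩
  · exact Or.inr ⟨a, h, rfl⟩

lemma sSet_eq_of_agree {Γ Δ : Set (Form Ag Atom)} {a : Ag}
    (hatom : ∀ p, owner p = a → (Form.atom p ∈ Γ ↔ Form.atom p ∈ Δ))
    (hB : ∀ φ, Form.B a φ ∈ Γ ↔ Form.B a φ ∈ Δ) :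
    sSet owner Γ a = sSet owner Δ a := by
  ext ψ
  constructor <;> rintro (⟨h, q, hq, rfl⟩ | ⟨h, φ, rfl⟩)
  · exact Or.inl ⟨(hatom q hq).1 h, q, hq, rfl⟩
  · exact Or.inr ⟨(hB φ).1 h, φ, rfl⟩
  · exact Or.inl ⟨(hatom q hq).2 h, q, hq, rfl⟩
  · exact Or.inr ⟨(hB φ).2 h, φ, rfl⟩

/-! #### Agreement lemmas -/

lemma sSet_projB_agree {Γ Δ : Set (Form Ag Atom)} {a : Ag}
    (hΓ : MaxEDLConsistent owner Γ) (hΔ : MaxEDLConsistent owner Δ)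
    (hsub : projB Γ a ⊆ Δ) :
    sSet owner Γ a = sSet owner Δ a ∧ projB Δ a ⊆ Δ := by
  have hBmp : ∀ φ, Form.B a φ ∈ Γ → Form.B a φ ∈ Δ := fun φ h =>
    hsub (mcs_mp hΓ (mcs_prov_mem hΓ (EDLProv.ax4B a φ)) h)
  have hBnot : ∀ φ, Form.B a φ ∉ Γ → Form.B a φ ∉ Δ := fun φ h =>
    mcs_not_mem_of_neg hΔ (hsub (mcs_mp hΓ (mcs_prov_mem hΓ (EDLProv.ax5B a φ))
      (mcs_neg_of_not_mem hΓ h)))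
  have hB : ∀ φ, Form.B a φ ∈ Γ ↔ Form.B a φ ∈ Δ := fun φ =>
    ⟨hBmp φ, fun h => by_contra (fun hn => hBnot φ hn h)⟩
  have hatom : ∀ p, owner p = a → (Form.atom p ∈ Γ ↔ Form.atom p ∈ Δ) := by
    intro p hp
    constructor
    · intro h
      exact hsub (mcs_loc_pos hΓ hp h)
    · intro h
      by_contra hn
      exact mcs_not_mem_of_neg hΔ
        (hsub (mcs_loc_neg hΓ hp (mcs_neg_of_not_mem hΓ hn))) h
  refine ⟨sSet_eq_of_agree hatom hB, fun φ hφ => hsub ((hB φ).2 hφ)⟩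

lemma sSet_projK_agree {Γ Δ : Set (Form Ag Atom)} {a : Ag}
    (hΓ : MaxEDLConsistent owner Γ) (hΔ : MaxEDLConsistent owner Δ)
    (hsub : projK Γ a ⊆ Δ) :
    sSet owner Γ a = sSet owner Δ a := by
  have hBmp : ∀ φ, Form.B a φ ∈ Γ → Form.B a φ ∈ Δ := fun φ h =>
    hsub (mcs_mp hΓ (mcs_prov_mem hΓ (EDLProv.axPI a φ)) h)
  have hBnot : ∀ φ, Form.B a φ ∉ Γ → Form.B a φ ∉ Δ := fun φ h =>
    mcs_not_mem_of_neg hΔ (hsub (mcs_mp hΓ (mcs_prov_mem hΓ (EDLProv.axNI a φ))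
      (mcs_neg_of_not_mem hΓ h)))
  have hB : ∀ φ, Form.B a φ ∈ Γ ↔ Form.B a φ ∈ Δ := fun φ =>
    ⟨hBmp φ, fun h => by_contra (fun hn => hBnot φ hn h)⟩
  have hatom : ∀ p, owner p = a → (Form.atom p ∈ Γ ↔ Form.atom p ∈ Δ) := by
    intro p hp
    constructor
    · intro h
      have h1 : Form.B a (Form.atom p) ∈ Δ := hBmp _ (mcs_loc_pos hΓ hp h)
      by_contra hn
      exact mcs_no_contra hΔ h1 (mcs_loc_neg hΔ hp (mcs_neg_of_not_mem hΔ hn))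
    · intro h
      by_contra hn
      have h1 : Form.B a (Form.neg (Form.atom p)) ∈ Δ :=
        hBmp _ (mcs_loc_neg hΓ hp (mcs_neg_of_not_mem hΓ hn))
      exact mcs_no_contra hΔ (mcs_loc_pos hΔ hp h) h1
  exact sSet_eq_of_agree hatom hB

lemma mcs_K_transfer {Γ Δ : Set (Form Ag Atom)} {a : Ag} {φ : Form Ag Atom}
    (hΓ : MaxEDLConsistent owner Γ) (hΔ : MaxEDLConsistent owner Δ)
    (hss : sSet owner Γ a = sSet owner Δ a) (h : Form.K a φ ∈ Γ) :
    Form.K a φ ∈ Δ := by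
  have h1 : Form.B a (Form.K a φ) ∈ Γ :=
    mcs_mp hΓ (mcs_prov_mem hΓ (EDLProv.axKIB a _))
      (mcs_mp hΓ (mcs_prov_mem hΓ (EDLProv.ax4K a φ)) h)
  have h2 : Form.B a (Form.K a φ) ∈ Δ := by
    have h1' : Form.B a (Form.K a φ) ∈ sSet owner Γ a := B_mem_sSet_iff.2 h1
    rw [hss] at h1'
    exact B_mem_sSet_iff.1 h1'
  by_contra hn
  have h3 : Form.B a (Form.neg (Form.K a φ)) ∈ Δ :=
    mcs_mp hΔ (mcs_prov_mem hΔ (EDLProv.axKIB a _))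
      (mcs_mp hΔ (mcs_prov_mem hΔ (EDLProv.ax5K a φ)) (mcs_neg_of_not_mem hΔ hn))
  exact mcs_no_contra hΔ h2 h3

/-! #### Existence lemmas -/

lemma exists_mcs_projB {Γ : Set (Form Ag Atom)} {a : Ag} {φ : Form Ag Atom}
    (hΓ : MaxEDLConsistent owner Γ) (h : Form.B a φ ∉ Γ) :
    ∃ Δ : Set (Form Ag Atom), MaxEDLConsistent owner Δ ∧ projB Γ a ⊆ Δ ∧ φ ∉ Δ := by
  have hcon : EDLConsistent owner (insert (Form.neg φ) (projB Γ a)) := by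
    intro hbot
    have h1 : ProvFrom owner (projB Γ a) ((Form.neg φ).imp Form.bot) :=
      provFrom_deduction hbot
    have h2 : ProvFrom owner (projB Γ a) φ :=
      provFrom_mp (provFrom_of_prov (EDLProv.taut (tautNegImpBot φ))) h1
    obtain ⟨L, hL, hp⟩ := h2
    have hbox : Form.B a (conj L) ∈ Γ :=
      mcs_box_conj hΓ (Form.B a) (fun χ ψ => EDLProv.axKB a χ ψ)
        (fun χ hc => Prov.necB a hc) L (fun ψ hψ => hL ψ hψ)
    have himp : Form.B a ((conj L).imp φ) ∈ Γ := mcs_prov_mem hΓ (Prov.necB a hp)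
    exact h (mcs_mp hΓ (mcs_mp hΓ (mcs_prov_mem hΓ (EDLProv.axKB a _ _)) himp) hbox)
  obtain ⟨Δ, hsub, hΔ⟩ := lindenbaum hcon
  exact ⟨Δ, hΔ, fun ψ hψ => hsub (Set.mem_insert_of_mem _ hψ),
    mcs_not_mem_of_neg hΔ (hsub (Set.mem_insert _ _))⟩

lemma exists_mcs_projK {Γ : Set (Form Ag Atom)} {a : Ag} {φ : Form Ag Atom}
    (hΓ : MaxEDLConsistent owner Γ) (h : Form.K a φ ∉ Γ) :
    ∃ Δ : Set (Form Ag Atom), MaxEDLConsistent owner Δ ∧ projK Γ a ⊆ Δ ∧ φ ∉ Δ := by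
  have hcon : EDLConsistent owner (insert (Form.neg φ) (projK Γ a)) := by
    intro hbot
    have h1 : ProvFrom owner (projK Γ a) ((Form.neg φ).imp Form.bot) :=
      provFrom_deduction hbot
    have h2 : ProvFrom owner (projK Γ a) φ :=
      provFrom_mp (provFrom_of_prov (EDLProv.taut (tautNegImpBot φ))) h1
    obtain ⟨L, hL, hp⟩ := h2
    have hbox : Form.K a (conj L) ∈ Γ :=
      mcs_box_conj hΓ (Form.K a) (fun χ ψ => EDLProv.axKK a χ ψ)
        (fun χ hc => EDLProv.nec a hc) L (fun ψ hψ => hL ψ hψ)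
    have himp : Form.K a ((conj L).imp φ) ∈ Γ := mcs_prov_mem hΓ (EDLProv.nec a hp)
    exact h (mcs_mp hΓ (mcs_mp hΓ (mcs_prov_mem hΓ (EDLProv.axKK a _ _)) himp) hbox)
  obtain ⟨Δ, hsub, hΔ⟩ := lindenbaum hcon
  exact ⟨Δ, hΔ, fun ψ hψ => hsub (Set.mem_insert_of_mem _ hψ),
    mcs_not_mem_of_neg hΔ (hsub (Set.mem_insert _ _))⟩

/-! #### The Truth Lemma -/

lemma truth_aux (φ : Form Ag Atom) :
    ∀ Γ : Set (Form Ag Atom), MaxEDLConsistent owner Γ →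
      (hsat (canonHM owner) (cedge owner Γ) φ ↔ φ ∈ Γ) := by
  induction φ with
  | atom p =>
    intro Γ hΓ
    show p ∈ elabel (canonHM owner) (cedge owner Γ) ↔ _
    simp only [elabel, Set.mem_iUnion]
    constructor
    · rintro ⟨u, hu, hp⟩
      obtain ⟨b, rfl⟩ : ∃ b, u = cvert owner Γ b := by
        rcases hu with ⟨b, -, rfl⟩ | ⟨b, -, rfl⟩ <;> exact ⟨b, rfl⟩
      exact (atom_mem_sSet_iff.1 hp.1).1
    · intro h
      exact ⟨cvert owner Γ (owner p), cvert_mem_ebar Γ (owner p),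
        atom_mem_sSet_iff.2 ⟨h, rfl⟩, rfl⟩
  | neg φ ih =>
    intro Γ hΓ
    show ¬ hsat (canonHM owner) (cedge owner Γ) φ ↔ _
    rw [ih Γ hΓ]
    exact (mcs_neg_iff hΓ φ).symm
  | and φ ψ ihφ ihψ =>
    intro Γ hΓ
    show (hsat _ _ φ ∧ hsat _ _ ψ) ↔ _
    rw [ihφ Γ hΓ, ihψ Γ hΓ, mcs_and_iff hΓ]
  | B a φ ih =>
    intro Γ hΓ
    show (∀ e' ∈ (canonHM owner).E, Bacc (canonHM owner) a (cedge owner Γ) e' →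
      hsat (canonHM owner) e' φ) ↔ _
    constructor
    · intro h
      by_contra hB
      obtain ⟨Δ, hΔ, hsub, hφ⟩ := exists_mcs_projB hΓ hB
      obtain ⟨hss, hpr⟩ := sSet_projB_agree hΓ hΔ hsub
      have hE : cedge owner Δ ∈ (canonHM owner).E := ⟨Δ, hΔ, rfl⟩
      have hacc : Bacc (canonHM owner) a (cedge owner Γ) (cedge owner Δ) := by
        refine ⟨cvert owner Γ a, rfl, cvert_mem_ebar Γ a, ⟨a, hpr, ?_⟩⟩
        simp only [cvert, hss]
      exact hφ ((ih Δ hΔ).1 (h _ hE hacc))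
    · intro h e' he' hacc
      obtain ⟨Δ, hΔ, rfl⟩ := he'
      obtain ⟨u, hχ, hu1, hu2⟩ := hacc
      have hu : u = cvert owner Γ a := by
        rcases hu1 with ⟨b, -, rfl⟩ | ⟨b, -, rfl⟩ <;> (cases hχ; rfl)
      subst hu
      obtain ⟨c, hc, heq⟩ := hu2
      have hca : c = a := (congrArg Prod.fst heq).symm
      rw [hca] at hc heq
      have hss : sSet owner Γ a = sSet owner Δ a := congrArg Prod.snd heq
      have hBΔ : Form.B a φ ∈ Δ := by
        have h1 : Form.B a φ ∈ sSet owner Γ a := B_mem_sSet_iff.2 h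
        rw [hss] at h1
        exact B_mem_sSet_iff.1 h1
      exact (ih Δ hΔ).2 (hc hBΔ)
  | K a φ ih =>
    intro Γ hΓ
    show (∀ e' ∈ (canonHM owner).E, Kacc (canonHM owner) a (cedge owner Γ) e' →
      hsat (canonHM owner) e' φ) ↔ _
    constructor
    · intro h
      by_contra hK
      obtain ⟨Δ, hΔ, hsub, hφ⟩ := exists_mcs_projK hΓ hK
      have hss : sSet owner Γ a = sSet owner Δ a := sSet_projK_agree hΓ hΔ hsub
      have hE : cedge owner Δ ∈ (canonHM owner).E := ⟨Δ, hΔ, rfl⟩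
      have hacc : Kacc (canonHM owner) a (cedge owner Γ) (cedge owner Δ) := by
        refine ⟨cvert owner Γ a, rfl, cvert_mem_ebar Γ a, ?_⟩
        have : cvert owner Γ a = cvert owner Δ a := by simp only [cvert, hss]
        rw [this]
        exact cvert_mem_ebar Δ a
      exact hφ ((ih Δ hΔ).1 (h _ hE hacc))
    · intro h e' he' hacc
      obtain ⟨Δ, hΔ, rfl⟩ := he'
      obtain ⟨u, hχ, hu1, hu2⟩ := hacc
      have hu : u = cvert owner Γ a := by
        rcases hu1 with ⟨b, -, rfl⟩ | ⟨b, -, rfl⟩ <;> (cases hχ; rfl)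
      subst hu
      obtain ⟨c, heq⟩ : ∃ c, cvert owner Γ a = cvert owner Δ c := by
        rcases hu2 with ⟨c, -, hc⟩ | ⟨c, -, hc⟩ <;> exact ⟨c, hc⟩
      have hca : c = a := (congrArg Prod.fst heq).symm
      rw [hca] at heq
      have hss : sSet owner Γ a = sSet owner Δ a := congrArg Prod.snd heq
      have hKΔ : Form.K a φ ∈ Δ := mcs_K_transfer hΓ hΔ hss h
      exact (ih Δ hΔ).2
        (mcs_mp hΔ (mcs_prov_mem hΔ (EDLProv.axTK a φ)) hKΔ)

end TruthLemmaAux2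

/-- Truth Lemma: in the canonical hypergraph model for EDL, a
formula is satisfied at the hyperedge `e_Γ` iff it belongs to Γ, for every
maximally EDL-consistent set Γ. -/
theorem statement_11 {Ag Atom : Type} [Fintype Ag] [Nonempty Ag] [Countable Atom] [Inhabited Atom]
    (owner : Atom → Ag) (Γ : Set (Form Ag Atom))
    (hΓ : MaxEDLConsistent owner Γ) (φ : Form Ag Atom) :
    hsat (canonHM owner) (cedge owner Γ) φ ↔ φ ∈ Γ := by
  exact truth_aux φ Γ hΓ

end DoxHG
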